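/- Let a : ℕ → ℂ, let X, h be integers with 1 ≤ h < X, and let B ≥ 0, C ≥ 1 be reals such that ∑_{m=X}^{2X} |a(m)|² ≤ C X and ∑_{m=X}^{2X} | (1/(2h+1)) ∑_{j=−h}^{h} a(m+j) |² ≤ B² X. Then | ∑_{l=−h, l≠0}^{h} ∑_{m=X}^{2X} a(m) · conj(a(m+l)) | ≤ (2h+1) · B · √C · X + C X. -/

import Mathlib

open Finset

theorem stmt_9 (a : ℕ → ℂ) (X h : ℕ) (hh : 1 ≤ h) (hX : h < X) (B C : ℝ)
    (hB : 0 ≤ B) (hC : 1 ≤ C)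
    (h2 : ∑ m ∈ Finset.Icc X (2 * X), (‖a m‖) ^ 2 ≤ C * X)
    (h1 : ∑ m ∈ Finset.Icc X (2 * X),
        (‖(1 / (2 * (h : ℂ) + 1)) *
          ∑ j ∈ Finset.Icc (-(h : ℤ)) (h : ℤ), a ((m : ℤ) + j).toNat‖) ^ 2
      ≤ B ^ 2 * X) :
    ‖∑ l ∈ (Finset.Icc (-(h : ℤ)) (h : ℤ)).erase 0,
        ∑ m ∈ Finset.Icc X (2 * X), a m * (starRingEnd ℂ) (a ((m : ℤ) + l).toNat)‖
      ≤ (2 * (h : ℝ) + 1) * B * Real.sqrt C * X + C * X := by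
  set s := Finset.Icc X (2 * X) with hs
  set T := Finset.Icc (-(h : ℤ)) (h : ℤ) with hT
  set S : ℕ → ℂ := fun m => ∑ j ∈ T, a ((m : ℤ) + j).toNat with hSdef
  have h0T : (0 : ℤ) ∈ T := by
    simp only [hT, Finset.mem_Icc]
    omega
  have hXpos : (0 : ℝ) ≤ (X : ℝ) := by positivity
  have hhpos : (0 : ℝ) < 2 * (h : ℝ) + 1 := by positivity
  -- key algebraic identity
  have key : (∑ l ∈ T.erase 0, ∑ m ∈ s, a m * (starRingEnd ℂ) (a ((m : ℤ) + l).toNat))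
      = (∑ m ∈ s, a m * (starRingEnd ℂ) (S m)) - ∑ m ∈ s, a m * (starRingEnd ℂ) (a m) := by
    rw [Finset.sum_comm, ← Finset.sum_sub_distrib]
    apply Finset.sum_congr rfl
    intro m _
    rw [Finset.sum_erase_eq_sub h0T]
    have : ((m : ℤ) + 0).toNat = m := by omega
    rw [this, hSdef]
    simp only [map_sum, Finset.mul_sum]
  rw [key]
  have tri : ‖(∑ m ∈ s, a m * (starRingEnd ℂ) (S m))
      - ∑ m ∈ s, a m * (starRingEnd ℂ) (a m)‖
      ≤ ‖∑ m ∈ s, a m * (starRingEnd ℂ) (S m)‖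
        + ‖∑ m ∈ s, a m * (starRingEnd ℂ) (a m)‖ := by
    exact norm_sub_le _ _
  -- second term
  have eq2 : (∑ m ∈ s, a m * (starRingEnd ℂ) (a m))
      = ((∑ m ∈ s, (‖a m‖) ^ 2 : ℝ) : ℂ) := by
    push_cast
    apply Finset.sum_congr rfl
    intro m _
    rw [Complex.mul_conj, ← Complex.ofReal_pow, Complex.sq_norm]
  have hnn2 : (0 : ℝ) ≤ ∑ m ∈ s, (‖a m‖) ^ 2 := by positivity
  have b2 : ‖∑ m ∈ s, a m * (starRingEnd ℂ) (a m)‖ ≤ C * X := by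
    rw [eq2, Complex.norm_of_nonneg hnn2]
    exact h2
  -- bound on ∑ |S m|^2
  have hSsq : ∑ m ∈ s, (‖S m‖) ^ 2 ≤ (2 * (h : ℝ) + 1) ^ 2 * (B ^ 2 * X) := by
    have habs : ∀ m, (‖(1 / (2 * (h : ℂ) + 1)) * S m‖) ^ 2
        = (‖S m‖) ^ 2 / (2 * (h : ℝ) + 1) ^ 2 := by
      intro m
      rw [norm_mul, mul_pow]
      have : (2 * (h : ℂ) + 1) = ((2 * (h : ℝ) + 1 : ℝ) : ℂ) := by push_cast; ring
      rw [norm_div, this, Complex.norm_of_nonneg hhpos.le, norm_one]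
      field_simp
    have := h1
    simp only [show ∀ m : ℕ, (∑ j ∈ T, a ((m : ℤ) + j).toNat) = S m from fun _ => rfl, habs] at this
    rw [← Finset.sum_div] at this
    calc ∑ m ∈ s, (‖S m‖) ^ 2
        = ((∑ m ∈ s, (‖S m‖) ^ 2) / (2 * (h : ℝ) + 1) ^ 2)
          * (2 * (h : ℝ) + 1) ^ 2 := by field_simp
      _ ≤ (B ^ 2 * X) * (2 * (h : ℝ) + 1) ^ 2 := by
          apply mul_le_mul_of_nonneg_right this (by positivity)
      _ = (2 * (h : ℝ) + 1) ^ 2 * (B ^ 2 * X) := by ring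
  -- first term via Cauchy-Schwarz
  have b1 : ‖∑ m ∈ s, a m * (starRingEnd ℂ) (S m)‖
      ≤ (2 * (h : ℝ) + 1) * B * Real.sqrt C * X := by
    have step1 : ‖∑ m ∈ s, a m * (starRingEnd ℂ) (S m)‖
        ≤ ∑ m ∈ s, ‖a m‖ * ‖S m‖ := by
      refine le_trans (norm_sum_le _ _) ?_
      apply Finset.sum_le_sum
      intro m _
      rw [norm_mul, Complex.norm_conj]
    have cs : (∑ m ∈ s, ‖a m‖ * ‖S m‖) ^ 2
        ≤ (∑ m ∈ s, (‖a m‖) ^ 2) * ∑ m ∈ s, (‖S m‖) ^ 2 :=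
      Finset.sum_mul_sq_le_sq_mul_sq s _ _
    have hnn : (0 : ℝ) ≤ ∑ m ∈ s, ‖a m‖ * ‖S m‖ := by positivity
    have hle : (∑ m ∈ s, ‖a m‖ * ‖S m‖) ^ 2
        ≤ (C * X) * ((2 * (h : ℝ) + 1) ^ 2 * (B ^ 2 * X)) := by
      refine le_trans cs (mul_le_mul h2 hSsq (by positivity) (by positivity))
    have : (∑ m ∈ s, ‖a m‖ * ‖S m‖)
        ≤ Real.sqrt ((C * X) * ((2 * (h : ℝ) + 1) ^ 2 * (B ^ 2 * X))) := by
      rw [← Real.sqrt_sq hnn]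
      exact Real.sqrt_le_sqrt hle
    refine le_trans step1 (le_trans this ?_)
    have : (C * X) * ((2 * (h : ℝ) + 1) ^ 2 * (B ^ 2 * X))
        = ((2 * (h : ℝ) + 1) * B * Real.sqrt C * X) ^ 2 := by
      rw [mul_pow, mul_pow, mul_pow, Real.sq_sqrt (by linarith : (0:ℝ) ≤ C)]
      ring
    rw [this, Real.sqrt_sq (by positivity)]
  linarith [tri]
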